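/- arXiv:1702.03667 — 3 statements merged into one kernel-verified Lean document; each statement's English description precedes it below -/
import Mathlib

section
/- Assume liminf_{n→∞} d0/ln n ≥ 1 (i.e., d0 ≥ (1+o(1)) ln n). Then E|SMALL| = o(n^{1/3}) and with high probability |SMALL| ≤ n^{1/3}. Moreover, if in addition d0 ≥ 2 ln n for all sufficiently large n, then with high probability SMALL = ∅. -/
open MeasureTheory Filter

noncomputable def bern (p : ℝ) : Measure Bool :=
  (PMF.bernoulli (min (Real.toNNReal p) 1) (min_le_right _ _)).toMeasure

/-- The random intersection graph model: the sample space is the bipartite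
choice structure `ω : Fin n → Fin m → Bool`, where `ω v w = true` means vertex `v`
chose feature `w`, each choice made independently with probability `p`. -/
noncomputable def rig (n m : ℕ) (p : ℝ) : Measure (Fin n → Fin m → Bool) :=
  Measure.pi fun _ => Measure.pi fun _ => bern p

/-- The intersection graph determined by the choices `ω`:
two distinct vertices are adjacent iff they share a feature. -/
def rigGraph {n m : ℕ} (ω : Fin n → Fin m → Bool) : SimpleGraph (Fin n) where
  Adj v v' := v ≠ v' ∧ ∃ w, ω v w = true ∧ ω v' w = true
  symm := ⟨by rintro v v' ⟨h, w, h1, h2⟩; exact ⟨h.symm, w, h2, h1⟩⟩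
  loopless := ⟨by rintro v ⟨h, -⟩; exact h rfl⟩

/-- degree of `v` in the intersection graph -/
noncomputable def deg {n m : ℕ} (ω : Fin n → Fin m → Bool) (v : Fin n) : ℕ :=
  Set.ncard {u | (rigGraph ω).Adj v u}

/-- `W(v)`: number of features chosen by `v` -/
noncomputable def Wv {n m : ℕ} (ω : Fin n → Fin m → Bool) (v : Fin n) : ℕ :=
  Set.ncard {w | ω v w = true}

/-- `V(w)`: number of vertices choosing feature `w` -/
noncomputable def Vw {n m : ℕ} (ω : Fin n → Fin m → Bool) (w : Fin m) : ℕ :=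
  Set.ncard {v | ω v w = true}

/-- `W'(v)`: number of features chosen by `v` that are chosen by at least two vertices -/
noncomputable def Wv' {n m : ℕ} (ω : Fin n → Fin m → Bool) (v : Fin n) : ℕ :=
  Set.ncard {w | ω v w = true ∧ 2 ≤ Set.ncard {u | ω u w = true}}

/-- `W(S)`: number of features chosen by at least one vertex of `S` -/
noncomputable def WS {n m : ℕ} (ω : Fin n → Fin m → Bool) (S : Set (Fin n)) : ℕ :=
  Set.ncard {w | ∃ v ∈ S, ω v w = true}

/-- `V(R)`: number of vertices choosing at least one feature of `R` -/
noncomputable def VR {n m : ℕ} (ω : Fin n → Fin m → Bool) (R : Set (Fin m)) : ℕ :=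
  Set.ncard {v | ∃ w ∈ R, ω v w = true}

/-- `W''(K)`: number of features chosen by at least two vertices of `K` -/
noncomputable def WSpp {n m : ℕ} (ω : Fin n → Fin m → Bool) (K : Set (Fin n)) : ℕ :=
  Set.ncard {w | 2 ≤ Set.ncard {v | v ∈ K ∧ ω v w = true}}

/-- `N(S)`: number of vertices outside `S` adjacent to at least one vertex of `S` -/
noncomputable def NS {n m : ℕ} (ω : Fin n → Fin m → Bool) (S : Set (Fin n)) : ℕ :=
  Set.ncard {u | u ∉ S ∧ ∃ v ∈ S, (rigGraph ω).Adj v u}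

noncomputable def d0 (n m : ℕ) (p : ℝ) : ℝ := m * p * (1 - (1 - p) ^ (n - 1))

noncomputable def d1 (n m : ℕ) (p : ℝ) : ℝ := n * m * p ^ 2

/-!
Transposing the vertex–feature matrix, `W'(v)` becomes a sum of `m` independent indicators of the
column events "`v` and some other vertex choose `w`", each of probability `p (1 - (1 - p)^(n-1))`,
so `W'(v) ~ Bin(m, d0/m)`. The lower-tail Chernoff bound gives
`P(W'(v) ≤ δ d0) ≤ exp(-φ(δ) d0)` with `φ(δ) = 1 - δ + δ log δ`, and `φ(1/10) ≈ 0.6697 > 2/3`.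
Hence `E|SMALL| ≤ n exp(-φ d0) ≤ n^(1 - a φ)` whenever `d0 ≥ a log n`: with `a` slightly below `1`
this is `o(n^(1/3))`, with `a = 2` it tends to `0`, and Markov's inequality does the rest.
-/

open Real ProbabilityTheory Topology Asymptotics

instance (p : ℝ) : IsProbabilityMeasure (bern p) := PMF.toMeasure.isProbabilityMeasure _

instance (n m : ℕ) (p : ℝ) : IsProbabilityMeasure (rig n m p) := by
  rw [rig]; infer_instance

lemma integral_exp_mul_indicator_one {Ω : Type*} [MeasurableSpace Ω] (μ : Measure Ω)
    [IsProbabilityMeasure μ] {s : Set Ω} (hs : MeasurableSet s) (t : ℝ) :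
    ∫ x, exp (t * s.indicator 1 x) ∂μ = 1 + (exp t - 1) * μ.real s := by
  have h : (fun x => exp (t * s.indicator 1 x))
      = fun x => s.indicator (fun _ => exp t - 1) x + 1 := by
    funext x; by_cases hx : x ∈ s <;> simp [hx]
  rw [h, integral_add ((integrable_const _).indicator hs) (integrable_const 1),
    integral_indicator_const _ hs, integral_const, probReal_univ, smul_eq_mul, smul_eq_mul]
  ring

lemma map_swap_pi_pi {ι κ α : Type*} [Fintype ι] [Fintype κ] [MeasurableSpace α] [Countable α]
    [MeasurableSingletonClass α] (μ : Measure α) [SigmaFinite μ] :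
    (Measure.pi fun _ : κ => Measure.pi fun _ : ι => μ).map Function.swap
      = Measure.pi fun _ : ι => Measure.pi fun _ : κ => μ := by
  refine Measure.ext_of_singleton fun ω => ?_
  rw [Measure.map_apply (measurable_of_countable _) (measurableSet_singleton ω),
    show Function.swap ⁻¹' {ω} = {Function.swap ω} by
      ext σ; exact ⟨fun h => h ▸ rfl, fun h => h ▸ rfl⟩]
  simp only [Measure.pi_singleton]
  exact Finset.prod_comm

lemma integral_ncard_setOf_eq_sum {Ω ι : Type*} [MeasurableSpace Ω] (μ : Measure Ω)
    [IsFiniteMeasure μ] [Fintype ι] {P : ι → Ω → Prop} (hP : ∀ i, MeasurableSet {ω | P i ω}) :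
    ∫ ω, ({i | P i ω}.ncard : ℝ) ∂μ = ∑ i, μ.real {ω | P i ω} := by
  classical
  have hcard : ∀ ω, ({i | P i ω}.ncard : ℝ) = ∑ i, {ω | P i ω}.indicator 1 ω := by
    intro ω
    simp only [Set.indicator_apply, Set.mem_ofPred_eq, Pi.one_apply, Finset.sum_boole]
    rw [← Set.ncard_coe_finset, Finset.coe_filter_univ]
  simp_rw [hcard]
  rw [integral_finsetSum _ fun i _ => (integrable_const 1).indicator (hP i)]
  simp_rw [integral_indicator_one (hP _)]

lemma one_sub_integral_div_le_measureReal_lt {Ω : Type*} [MeasurableSpace Ω] {μ : Measure Ω}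
    [IsProbabilityMeasure μ] {X : Ω → ℝ} (hX : 0 ≤ X) (hint : Integrable X μ) {a : ℝ}
    (ha : 0 < a) : 1 - (∫ ω, X ω ∂μ) / a ≤ μ.real {ω | X ω < a} := by
  have hcompl : {ω | X ω < a} = {ω | a ≤ X ω}ᶜ := by ext; simp
  have hmarkov : a * μ.real {ω | a ≤ X ω} ≤ ∫ ω, X ω ∂μ :=
    mul_meas_ge_le_integral_of_nonneg (ae_of_all _ hX) hint a
  rw [hcompl, probReal_compl_eq_one_sub₀ (nullMeasurableSet_le aemeasurable_const
    hint.aemeasurable), sub_le_sub_iff_left, le_div_iff₀ ha, mul_comm]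
  exact hmarkov

lemma tendsto_measureReal_lt_of_tendsto_integral_div {Ω : ℕ → Type*}
    [∀ n, MeasurableSpace (Ω n)] {μ : ∀ n, Measure (Ω n)} [∀ n, IsProbabilityMeasure (μ n)]
    {X : ∀ n, Ω n → ℝ} {a : ℕ → ℝ} (hX : ∀ n, 0 ≤ X n) (hint : ∀ n, Integrable (X n) (μ n))
    (ha : ∀ᶠ n in atTop, 0 < a n)
    (h : Tendsto (fun n => (∫ ω, X n ω ∂μ n) / a n) atTop (𝓝 0)) :
    Tendsto (fun n => (μ n).real {ω | X n ω < a n}) atTop (𝓝 1) := by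
  refine tendsto_of_tendsto_of_tendsto_of_le_of_le' (by simpa using h.const_sub 1)
    tendsto_const_nhds ?_ (Eventually.of_forall fun n => measureReal_le_one)
  filter_upwards [ha] with n han
  exact one_sub_integral_div_le_measureReal_lt (hX n) (hint n) han

noncomputable def lowerTailRate (δ : ℝ) : ℝ := 1 - δ + δ * log δ

lemma lowerTailRate_nonneg {δ : ℝ} (hδ : 0 < δ) : 0 ≤ lowerTailRate δ := by
  have h := mul_le_mul_of_nonneg_left (one_sub_inv_le_log_of_pos hδ) hδ.le
  rw [mul_sub, mul_one, mul_inv_cancel₀ hδ.ne'] at h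
  rw [lowerTailRate]
  linarith

lemma measureReal_le_le_exp_lowerTailRate_of_mgf_eq {Ω : Type*} [MeasurableSpace Ω] {μ : Measure Ω}
    [IsFiniteMeasure μ] {X : Ω → ℝ} {m : ℕ} {q δ : ℝ} (hq : q ≤ 1) (hδ : δ ∈ Set.Ioc 0 1)
    (hint : ∀ t, Integrable (fun ω => exp (t * X ω)) μ)
    (hmgf : ∀ t, mgf X μ t = (1 + (exp t - 1) * q) ^ m) :
    μ.real {ω | X ω ≤ δ * (m * q)} ≤ exp (-lowerTailRate δ * (m * q)) := by
  have hbase : 0 ≤ 1 + (δ - 1) * q := by nlinarith [hδ.1, hδ.2]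
  calc μ.real {ω | X ω ≤ δ * (m * q)}
      ≤ exp (-log δ * (δ * (m * q))) * mgf X μ (log δ) :=
        measure_le_le_exp_mul_mgf _ (log_nonpos hδ.1.le hδ.2) (hint _)
    _ = exp (-log δ * (δ * (m * q))) * (1 + (δ - 1) * q) ^ m := by rw [hmgf, exp_log hδ.1]
    _ ≤ exp (-log δ * (δ * (m * q))) * exp ((δ - 1) * q) ^ m := by
        gcongr; linarith [add_one_le_exp ((δ - 1) * q)]
    _ = exp (-lowerTailRate δ * (m * q)) := by
        rw [← exp_nat_mul, ← exp_add, lowerTailRate]; ring_nf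

-- `0.997` is a factor `a < 1` with `a φ(1/10) > 2/3`, for use with `d0 ≥ a log n`.
lemma two_thirds_lt_lowerTailRate : 2 / 3 < 0.997 * lowerTailRate 0.1 := by
  have hlog10 : log 10 < 2.3105 := by
    have h : log (10 ^ 3) < log (2 ^ 10) := log_lt_log (by norm_num) (by norm_num)
    rw [log_pow, log_pow] at h
    push_cast at h
    linarith [log_two_lt_d9]
  have h : log 0.1 = -log 10 := by rw [← log_inv]; norm_num
  rw [lowerTailRate, h]
  linarith

lemma mul_exp_neg_mul_le_rpow {x a c d : ℝ} (hx : 0 < x) (hc : 0 ≤ c) (hd : a * log x ≤ d) :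
    x * exp (-c * d) ≤ x ^ (1 - a * c) := by
  rw [rpow_def_of_pos hx, mul_sub, mul_one, exp_sub, exp_log hx, div_eq_mul_inv, ← exp_neg]
  gcongr
  nlinarith

lemma eventually_mul_log_le_of_one_le_liminf {d : ℕ → ℝ} (hd : ∀ n, 0 ≤ d n)
    (h : 1 ≤ liminf (fun n : ℕ => d n / log n) atTop) {a : ℝ} (ha : a < 1) :
    ∀ᶠ n : ℕ in atTop, a * log n ≤ d n := by
  have hbdd : IsBoundedUnder (· ≥ ·) atTop fun n : ℕ => d n / log n :=
    isBoundedUnder_of ⟨0, fun n => div_nonneg (hd n) (log_natCast_nonneg n)⟩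
  filter_upwards [eventually_lt_of_lt_liminf (ha.trans_le h) hbdd, eventually_ge_atTop 2]
    with n hn hn2
  have hlog : 0 < log n := log_pos (by exact_mod_cast hn2)
  exact ((lt_div_iff₀ hlog).mp hn).le

lemma isLittleO_rpow_rpow_atTop {a b : ℝ} (h : a < b) :
    (fun x : ℝ => x ^ a) =o[atTop] fun x => x ^ b := by
  have hsplit : (fun x : ℝ => x ^ (a - b) * x ^ b) =ᶠ[atTop] fun x => x ^ a := by
    filter_upwards [eventually_gt_atTop 0] with x hx
    rw [← rpow_add hx, sub_add_cancel]
  have hdecay : (fun x : ℝ => x ^ (a - b)) =o[atTop] fun _ => (1 : ℝ) :=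
    (isLittleO_one_iff ℝ).mpr (by simpa using tendsto_rpow_neg_atTop (sub_pos.mpr h))
  simpa using (hdecay.mul_isBigO (isBigO_refl (fun x : ℝ => x ^ b) atTop)).congr' hsplit
    EventuallyEq.rfl

lemma isLittleO_natCast_rpow_of_eventually_le {E : ℕ → ℝ} {a b : ℝ} (hab : a < b)
    (hE0 : ∀ n, 0 ≤ E n) (hE : ∀ᶠ n : ℕ in atTop, E n ≤ (n : ℝ) ^ a) :
    E =o[atTop] fun n : ℕ => (n : ℝ) ^ b := by
  refine (IsBigO.of_bound' ?_).trans_isLittleO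
    ((isLittleO_rpow_rpow_atTop hab).comp_tendsto tendsto_natCast_atTop_atTop)
  filter_upwards [hE] with n hn
  rw [norm_of_nonneg (hE0 n)]
  exact hn.trans (le_norm_self _)

section RandomIntersectionGraph

variable {n m : ℕ} {p δ : ℝ}

lemma bern_singleton_true (hp : p ≤ 1) : bern p {true} = ENNReal.ofReal p := by
  simp only [bern, PMF.toMeasure_apply_singleton _ _ (measurableSet_singleton _),
    min_eq_left (Real.toNNReal_le_one.mpr hp)]
  rfl

lemma bern_singleton_false (hp : p ∈ Set.Icc 0 1) : bern p {false} = ENNReal.ofReal (1 - p) := by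
  rw [bern, PMF.toMeasure_apply_singleton _ _ (measurableSet_singleton _)]
  simp only [min_eq_left (Real.toNNReal_le_one.mpr hp.2)]
  change ((1 - p.toNNReal : NNReal) : ENNReal) = _
  rw [ENNReal.coe_sub, ENNReal.coe_one, ENNReal.ofReal_sub _ hp.1, ENNReal.ofReal_one]
  rfl

lemma pi_bern_eval_eq_true (hp : p ≤ 1) (v : Fin n) :
    Measure.pi (fun _ : Fin n => bern p) {c | c v = true} = ENNReal.ofReal p :=
  ((measurePreserving_eval (fun _ : Fin n => bern p) v).measure_preimage
    (measurableSet_singleton true).nullMeasurableSet).trans (bern_singleton_true hp)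

lemma pi_bern_singleton_indicator (hp : p ∈ Set.Icc 0 1) (v : Fin n) :
    Measure.pi (fun _ : Fin n => bern p) {fun u => decide (u = v)}
      = ENNReal.ofReal p * ENNReal.ofReal (1 - p) ^ (n - 1) := by
  rw [Measure.pi_singleton, ← Finset.mul_prod_erase _ _ (Finset.mem_univ v), decide_eq_true rfl,
    bern_singleton_true hp.2, Finset.prod_congr rfl fun u hu => by
      rw [decide_eq_false (Finset.ne_of_mem_erase hu), bern_singleton_false hp],
    Finset.prod_const, Finset.card_erase_of_mem (Finset.mem_univ v), Finset.card_univ,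
    Fintype.card_fin]

-- A feature with column of choices `c` counts towards `W'(v)` iff `c ∈ sharedBy n v`.
variable (n) in
def sharedBy (v : Fin n) : Set (Fin n → Bool) :=
  {c | c v = true ∧ 2 ≤ Set.ncard {u | c u = true}}

lemma sharedBy_eq_diff (v : Fin n) :
    sharedBy n v = {c | c v = true} \ {fun u => decide (u = v)} := by
  ext c
  simp only [sharedBy, Set.mem_ofPred_eq, Set.mem_sdiff, Set.mem_singleton_iff,
    and_congr_right_iff]
  intro hv
  change 1 < _ ↔ _
  rw [Set.one_lt_ncard_iff (Set.toFinite _)]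
  constructor
  · rintro ⟨a, b, ha, hb, hab⟩ rfl
    simp_all
  · intro hc
    obtain ⟨u, hu⟩ : ∃ u, c u ≠ decide (u = v) := by
      by_contra! h; exact hc (funext h)
    have huv : u ≠ v := by rintro rfl; simp_all
    exact ⟨v, u, hv, by simpa [huv] using hu, huv.symm⟩

lemma pi_bern_sharedBy (hp : p ∈ Set.Icc 0 1) (v : Fin n) :
    (Measure.pi fun _ : Fin n => bern p).real (sharedBy n v)
      = p * (1 - (1 - p) ^ (n - 1)) := by
  have hsub : {fun u => decide (u = v)} ⊆ {c : Fin n → Bool | c v = true} := by simp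
  have h1p : 0 ≤ 1 - p := by linarith [hp.2]
  have hpow : (1 - p) ^ (n - 1) ≤ 1 := pow_le_one₀ h1p (by linarith [hp.1])
  rw [sharedBy_eq_diff, measureReal_def, measure_sdiff hsub
    (measurableSet_singleton _).nullMeasurableSet (measure_ne_top _ _),
    pi_bern_eval_eq_true hp.2, pi_bern_singleton_indicator hp, ← ENNReal.ofReal_pow h1p,
    ← ENNReal.ofReal_mul hp.1, ← ENNReal.ofReal_sub _ (mul_nonneg hp.1 (pow_nonneg h1p _)),
    ENNReal.toReal_ofReal (sub_nonneg.mpr (mul_le_of_le_one_right hp.1 hpow))]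
  ring

lemma Wv'_swap (σ : Fin m → Fin n → Bool) (v : Fin n) :
    (Wv' (Function.swap σ) v : ℝ) = ∑ w, (sharedBy n v).indicator 1 (σ w) := by
  classical
  simp only [Set.indicator_apply, Pi.one_apply, Finset.sum_boole, Wv', sharedBy]
  rw [← Set.ncard_coe_finset, Finset.coe_filter_univ]
  rfl

lemma mgf_Wv' (hp : p ∈ Set.Icc 0 1) (v : Fin n) (t : ℝ) :
    mgf (fun ω => (Wv' ω v : ℝ)) (rig n m p) t
      = (1 + (exp t - 1) * (p * (1 - (1 - p) ^ (n - 1)))) ^ m := by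
  rw [mgf, rig, ← map_swap_pi_pi, integral_map (measurable_of_countable _).aemeasurable
    (measurable_of_countable _).aestronglyMeasurable]
  simp_rw [Wv'_swap, Finset.mul_sum, Real.exp_sum]
  rw [integral_fintype_prod_eq_pow (fun c => exp (t * (sharedBy n v).indicator 1 c)),
    integral_exp_mul_indicator_one _ (Set.toFinite _).measurableSet, pi_bern_sharedBy hp,
    Fintype.card_fin]

lemma rig_Wv'_le_le_exp (hp : p ∈ Set.Icc 0 1) (hδ : δ ∈ Set.Ioc 0 1) (v : Fin n) :
    (rig n m p).real {ω | (Wv' ω v : ℝ) ≤ δ * d0 n m p}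
      ≤ exp (-lowerTailRate δ * d0 n m p) := by
  have hq : p * (1 - (1 - p) ^ (n - 1)) ≤ 1 := by
    nlinarith [hp.1, hp.2, pow_nonneg (by linarith [hp.2] : (0 : ℝ) ≤ 1 - p) (n - 1)]
  have hd0 : d0 n m p = m * (p * (1 - (1 - p) ^ (n - 1))) := by rw [d0]; ring
  rw [hd0]
  exact measureReal_le_le_exp_lowerTailRate_of_mgf_eq hq hδ (fun _ => Integrable.of_finite)
    (mgf_Wv' hp v)

lemma integral_ncard_small_le (hp : p ∈ Set.Icc 0 1) (hδ : δ ∈ Set.Ioc 0 1) :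
    ∫ ω, ({v | (Wv' ω v : ℝ) ≤ δ * d0 n m p}.ncard : ℝ) ∂(rig n m p)
      ≤ n * exp (-lowerTailRate δ * d0 n m p) := by
  rw [integral_ncard_setOf_eq_sum _ fun _ => (Set.toFinite _).measurableSet]
  calc ∑ v, (rig n m p).real {ω | (Wv' ω v : ℝ) ≤ δ * d0 n m p}
      ≤ ∑ _v : Fin n, exp (-lowerTailRate δ * d0 n m p) :=
        Finset.sum_le_sum fun v _ => rig_Wv'_le_le_exp hp hδ v
    _ = n * exp (-lowerTailRate δ * d0 n m p) := by simp

lemma d0_nonneg (hp : p ∈ Set.Icc 0 1) : 0 ≤ d0 n m p := by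
  have h : (1 - p) ^ (n - 1) ≤ 1 := pow_le_one₀ (sub_nonneg.mpr hp.2) (sub_le_self 1 hp.1)
  exact mul_nonneg (mul_nonneg (Nat.cast_nonneg m) hp.1) (sub_nonneg.mpr h)

lemma integral_ncard_small_le_rpow (hp : p ∈ Set.Icc 0 1) (hδ : δ ∈ Set.Ioc 0 1) (hn : 0 < n)
    {a : ℝ} (hd : a * log n ≤ d0 n m p) :
    ∫ ω, ({v | (Wv' ω v : ℝ) ≤ δ * d0 n m p}.ncard : ℝ) ∂(rig n m p)
      ≤ (n : ℝ) ^ (1 - a * lowerTailRate δ) :=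
  (integral_ncard_small_le hp hδ).trans
    (mul_exp_neg_mul_le_rpow (by exact_mod_cast hn) (lowerTailRate_nonneg hδ.1) hd)

end RandomIntersectionGraph

theorem small_set_size (m : ℕ → ℕ) (p : ℕ → ℝ)
    (hp : ∀ n, p n ∈ Set.Ioo (0 : ℝ) 1)
    (hd0 : 1 ≤ Filter.liminf (fun (n : ℕ) => d0 n (m n) (p n) / Real.log n) atTop) :
    ((fun (n : ℕ) => ∫ ω, (Set.ncard {v | (Wv' ω v : ℝ) ≤ 0.1 * d0 n (m n) (p n)} : ℝ)
        ∂(rig n (m n) (p n))) =o[atTop] fun (n : ℕ) => (n : ℝ) ^ ((1 : ℝ) / 3)) ∧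
    Tendsto (fun (n : ℕ) => (rig n (m n) (p n)
        {ω | (Set.ncard {v | (Wv' ω v : ℝ) ≤ 0.1 * d0 n (m n) (p n)} : ℝ)
          ≤ (n : ℝ) ^ ((1 : ℝ) / 3)}).toReal) atTop (nhds 1) ∧
    ((∀ᶠ (n : ℕ) in atTop, 2 * Real.log n ≤ d0 n (m n) (p n)) →
      Tendsto (fun (n : ℕ) => (rig n (m n) (p n)
          {ω | {v | (Wv' ω v : ℝ) ≤ 0.1 * d0 n (m n) (p n)} = ∅}).toReal)
        atTop (nhds 1)) := by
  let X : ∀ n, (Fin n → Fin (m n) → Bool) → ℝ := fun n ω =>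
    ({v | (Wv' ω v : ℝ) ≤ 0.1 * d0 n (m n) (p n)}.ncard : ℝ)
  have hrate := two_thirds_lt_lowerTailRate
  have hE : ∀ a b : ℝ, 1 - a * lowerTailRate 0.1 < b →
      (∀ᶠ n : ℕ in atTop, a * log n ≤ d0 n (m n) (p n)) →
      (fun n => ∫ ω, X n ω ∂rig n (m n) (p n)) =o[atTop] fun n : ℕ => (n : ℝ) ^ b :=
    fun a b hab hd => isLittleO_natCast_rpow_of_eventually_le hab
      (fun n => integral_nonneg fun _ => Nat.cast_nonneg _) <| by
        filter_upwards [hd, eventually_gt_atTop 0] with n hdn hn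
        exact integral_ncard_small_le_rpow (Set.Ioo_subset_Icc_self (hp n)) (by norm_num) hn hdn
  have hMarkov := fun a : ℕ → ℝ => tendsto_measureReal_lt_of_tendsto_integral_div
    (μ := fun n => rig n (m n) (p n)) (X := X) (a := a) (fun n ω => Nat.cast_nonneg _)
    (fun n => Integrable.of_finite)
  have hE_isLittleO := hE 0.997 (1 / 3) (by linarith) <|
    eventually_mul_log_le_of_one_le_liminf
      (fun n => d0_nonneg (Set.Ioo_subset_Icc_self (hp n))) hd0 (by norm_num)
  refine ⟨hE_isLittleO, ?_, fun h2 => ?_⟩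
  · refine tendsto_of_tendsto_of_tendsto_of_le_of_le (hMarkov _
      ((eventually_gt_atTop 0).mono fun n hn => rpow_pos_of_pos (Nat.cast_pos.mpr hn) _)
      hE_isLittleO.tendsto_div_nhds_zero) tendsto_const_nhds
      (fun n => measureReal_mono (Set.ofPred_subset_ofPred.mpr fun _ => le_of_lt))
      fun n => measureReal_le_one
  · refine (hMarkov 1 (Eventually.of_forall fun _ => one_pos)
      (by simpa using (hE 2 0 (by linarith) h2).tendsto_div_nhds_zero)).congr fun n => ?_
    congr 2
    ext ω
    simp [X, Set.ncard_eq_zero (Set.toFinite _)]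
end

section
/- Assume d1 = nmp² → ∞ as n → ∞. Then the probability that there exists a set K ⊆ V with 2 ≤ |K| ≤ n/d1³ and W''(K) ≥ 2|K| tends to 0; equivalently, with high probability every K ⊆ V with |K| ≤ n/d1³ satisfies W''(K) ≤ 2|K|. -/
open MeasureTheory Filter

/-! A feature is doubly covered by a fixed `k`-set `K` with probability at most `k²p²`, and
independently over features, so `W''(K) ≥ 2k + 1` has probability at most
`C(m, 2k+1) (k²p²)^(2k+1)`. Summing over the `C(n, k)` sets of each size `2 ≤ k ≤ n / d³` and using
`C(a, b) ≤ (3a / b)^b`, the `k`-th term is at most `2⁻ᵏ · 3 / (2d²)`, so the failure probability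
is `O(d⁻²)`. -/

open Finset
open scoped Nat

theorem measurePreserving_swap_pi_pi {ι κ α : Type*} [Fintype ι] [Fintype κ] [MeasurableSpace α]
    [Countable α] [MeasurableSingletonClass α] (μ : Measure α) [SigmaFinite μ] :
    MeasurePreserving Function.swap (Measure.pi fun _ : κ => Measure.pi fun _ : ι => μ)
      (Measure.pi fun _ : ι => Measure.pi fun _ : κ => μ) := by
  refine ⟨by fun_prop, Measure.ext_of_singleton fun ω => ?_⟩
  have hpre : Function.swap ⁻¹' {ω} = {Function.swap ω} := by
    ext η; simp [funext_iff, forall_comm (α := ι)]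
  rw [Measure.map_apply (by fun_prop) (measurableSet_singleton _), hpre]
  simp only [← Set.univ_pi_singleton, Measure.pi_pi, Function.swap]
  exact Finset.prod_comm

theorem MeasureTheory.Measure.pi_setOf_two_le_card_filter_le {ι : Type*} [Fintype ι]
    [DecidableEq ι] (μ : Measure Bool) [IsProbabilityMeasure μ] (F : Finset ι) :
    Measure.pi (fun _ : ι => μ) {c | 2 ≤ #{v ∈ F | c v = true}} ≤ #F ^ 2 * μ {true} ^ 2 := by
  have hsub : {c : ι → Bool | 2 ≤ #{v ∈ F | c v = true}} ⊆
      ⋃ uv ∈ F.offDiag, ((({uv.1, uv.2} : Finset ι) : Set ι).pi fun _ => {true}) := by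
    intro c hc
    obtain ⟨u, hu, v, hv, huv⟩ := one_lt_card.1 hc
    rw [mem_filter] at hu hv
    exact Set.mem_biUnion (x := (u, v)) (mem_offDiag.2 ⟨hu.1, hv.1, huv⟩) (by simp [hu.2, hv.2])
  calc _ ≤ ∑ uv ∈ F.offDiag,
        Measure.pi (fun _ => μ) ((({uv.1, uv.2} : Finset ι) : Set ι).pi fun _ => {true}) :=
        (measure_mono hsub).trans (measure_biUnion_finset_le _ _)
    _ = #F.offDiag * μ {true} ^ 2 := by
        rw [← nsmul_eq_mul, ← sum_const]
        refine Finset.sum_congr rfl fun uv huv => ?_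
        rw [Measure.pi_pi_finset, prod_pair (mem_offDiag.1 huv).2.2, sq]
    _ ≤ #F ^ 2 * μ {true} ^ 2 := by
        gcongr
        rw [offDiag_card, sq]
        exact_mod_cast Nat.sub_le _ _

instance inst_s8 (p : ℝ) : IsProbabilityMeasure (bern p) := by
  unfold bern; infer_instance

instance inst_s8_2 (n m : ℕ) (p : ℝ) : IsProbabilityMeasure (rig n m p) := by
  unfold rig; infer_instance

theorem bern_singleton_true_le (p : ℝ) : bern p {true} ≤ ENNReal.ofReal p := by
  rw [bern, PMF.toMeasure_apply_singleton _ _ (measurableSet_singleton _)]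
  exact ENNReal.coe_le_coe.2 (min_le_left _ _)

theorem rig_forall_column_mem (n m : ℕ) (p : ℝ) (D : Set (Fin n → Bool)) (R : Finset (Fin m)) :
    rig n m p {ω | ∀ w ∈ R, (fun v => ω v w) ∈ D} = Measure.pi (fun _ => bern p) D ^ #R := by
  have hswap : {ω : Fin n → Fin m → Bool | ∀ w ∈ R, (fun v => ω v w) ∈ D} =
      Function.swap ⁻¹' ((R : Set (Fin m)).pi fun _ => D) := rfl
  rw [hswap, rig, (measurePreserving_swap_pi_pi (bern p)).measure_preimage
    (Set.toFinite _).measurableSet.nullMeasurableSet, Measure.pi_pi_finset, prod_const]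

theorem WSpp_coe_finset {n m : ℕ} (ω : Fin n → Fin m → Bool) (F : Finset (Fin n)) :
    WSpp ω F = #{w | 2 ≤ #{v ∈ F | ω v w = true}} := by
  rw [WSpp, ← Set.ncard_coe_finset]
  congr! with w
  simp [← Set.ncard_coe_finset]

theorem two_le_card_of_WSpp_ne_zero {n m : ℕ} {ω : Fin n → Fin m → Bool} {F : Finset (Fin n)}
    (h : WSpp ω F ≠ 0) : 2 ≤ #F := by
  rw [WSpp_coe_finset, ← pos_iff_ne_zero, card_pos] at h
  obtain ⟨w, hw⟩ := h
  exact (mem_filter.1 hw).2.trans (card_filter_le _ _)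

theorem rig_setOf_le_WSpp_le (n m : ℕ) (p : ℝ) (F : Finset (Fin n)) (r : ℕ) :
    rig n m p {ω | r ≤ WSpp ω F} ≤ m.choose r * (#F ^ 2 * ENNReal.ofReal p ^ 2) ^ r := by
  set D : Set (Fin n → Bool) := {c | 2 ≤ #{v ∈ F | c v = true}}
  have hsub : {ω | r ≤ WSpp ω F} ⊆
      ⋃ R ∈ powersetCard r (univ : Finset (Fin m)), {ω | ∀ w ∈ R, (fun v => ω v w) ∈ D} := by
    intro ω hω
    replace hω : r ≤ WSpp ω F := hω
    rw [WSpp_coe_finset] at hω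
    obtain ⟨R, hRsub, hR⟩ := exists_subset_card_eq hω
    exact Set.mem_biUnion (mem_powersetCard_univ.2 hR) fun w hw => (mem_filter.1 (hRsub hw)).2
  calc _ ≤ ∑ R ∈ powersetCard r (univ : Finset (Fin m)),
        rig n m p {ω | ∀ w ∈ R, (fun v => ω v w) ∈ D} :=
        (measure_mono hsub).trans (measure_biUnion_finset_le _ _)
    _ ≤ ∑ R ∈ powersetCard r (univ : Finset (Fin m)), (#F ^ 2 * ENNReal.ofReal p ^ 2) ^ r := by
        gcongr with R hR
        rw [rig_forall_column_mem, (mem_powersetCard.1 hR).2]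
        gcongr
        refine (Measure.pi_setOf_two_le_card_filter_le _ F).trans ?_
        gcongr
        exact bern_singleton_true_le p
    _ = _ := by simp [nsmul_eq_mul]

/-- The union bound, over the sets `K` with `2 ≤ |K| ≤ x`, for the event `W''(K) > 2|K|`. -/
noncomputable def firstMomentBound (n m : ℕ) (p x : ℝ) : ℝ :=
  ∑ k ∈ range (n + 1), n.choose k *
    if 2 ≤ k ∧ (k : ℝ) ≤ x then m.choose (2 * k + 1) * ((k : ℝ) ^ 2 * p ^ 2) ^ (2 * k + 1) else 0

theorem rig_exists_many_doubly_covered_le {n m : ℕ} {p : ℝ} (hp : 0 ≤ p) (x : ℝ) :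
    rig n m p {ω | ¬ ∀ K : Set (Fin n), (K.ncard : ℝ) ≤ x → (WSpp ω K : ℝ) ≤ 2 * K.ncard} ≤
      ENNReal.ofReal (firstMomentBound n m p x) := by
  set g : ℕ → ℝ := fun k =>
    if 2 ≤ k ∧ (k : ℝ) ≤ x then m.choose (2 * k + 1) * ((k : ℝ) ^ 2 * p ^ 2) ^ (2 * k + 1) else 0
  set 𝒦 := {F ∈ (univ : Finset (Fin n)).powerset | 2 ≤ #F ∧ (#F : ℝ) ≤ x}
  have hsub : {ω | ¬ ∀ K : Set (Fin n), (K.ncard : ℝ) ≤ x → (WSpp ω K : ℝ) ≤ 2 * K.ncard} ⊆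
      ⋃ F ∈ 𝒦, {ω : Fin n → Fin m → Bool | 2 * #F + 1 ≤ WSpp ω F} := by
    intro ω hω
    simp only [Set.mem_ofPred_eq, not_forall, not_le, exists_prop] at hω
    obtain ⟨K, hKx, hK⟩ := hω
    obtain ⟨F, rfl⟩ := K.toFinite.exists_finset_coe
    rw [Set.ncard_coe_finset] at hKx hK
    have hF : 2 * #F < WSpp ω F := by exact_mod_cast hK
    exact Set.mem_biUnion (mem_filter.2 ⟨mem_powerset.2 (subset_univ F),
      two_le_card_of_WSpp_ne_zero (Nat.ne_zero_of_lt hF), hKx⟩) hF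
  calc _ ≤ ∑ F ∈ 𝒦, rig n m p {ω : Fin n → Fin m → Bool | 2 * #F + 1 ≤ WSpp ω F} :=
        (measure_mono hsub).trans (measure_biUnion_finset_le _ _)
    _ ≤ ∑ F ∈ (univ : Finset (Fin n)).powerset, ENNReal.ofReal (g #F) := by
        rw [sum_filter]
        gcongr with F
        split_ifs with hF
        · simp only [g, if_pos hF]
          refine (rig_setOf_le_WSpp_le n m p F _).trans_eq ?_
          rw [ENNReal.ofReal_mul (by positivity), ENNReal.ofReal_pow (by positivity),
            ENNReal.ofReal_mul (by positivity), ENNReal.ofReal_pow hp,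
            ENNReal.ofReal_pow (by positivity), ENNReal.ofReal_natCast, ENNReal.ofReal_natCast]
        · exact zero_le
    _ = ENNReal.ofReal (firstMomentBound n m p x) := by
        rw [sum_powerset_apply_card fun k => ENNReal.ofReal (g k), card_univ, Fintype.card_fin,
          firstMomentBound, ENNReal.ofReal_sum_of_nonneg fun k _ => by positivity]
        refine sum_congr rfl fun k _ => ?_
        rw [nsmul_eq_mul, ENNReal.ofReal_mul (by positivity), ENNReal.ofReal_natCast]

theorem Nat.choose_le_three_mul_div_pow (a b : ℕ) : (a.choose b : ℝ) ≤ (3 * a / b) ^ b := by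
  rcases b.eq_zero_or_pos with rfl | hb
  · simp
  have hfact : (b : ℝ) ^ b / b ! ≤ 3 ^ b := by
    refine (Real.pow_div_factorial_le_exp _ b.cast_nonneg b).trans ?_
    rw [← Real.exp_one_pow]
    exact pow_le_pow_left₀ (Real.exp_pos 1).le (Real.exp_one_lt_d9.le.trans (by norm_num)) b
  calc (a.choose b : ℝ) ≤ a ^ b / b ! := Nat.choose_le_pow_div b a
    _ = (a / b) ^ b * (b ^ b / b !) := by
      rw [div_pow, ← mul_div_assoc, div_mul_cancel₀ _ (by positivity)]
    _ ≤ (a / b) ^ b * 3 ^ b := by gcongr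
    _ = (3 * a / b) ^ b := by ring

theorem Nat.choose_mul_pow_le (m r : ℕ) {y : ℝ} (hy : 0 ≤ y) :
    m.choose r * y ^ r ≤ (3 * m * y / r) ^ r :=
  calc _ ≤ (3 * m / r) ^ r * y ^ r := by gcongr; exact Nat.choose_le_three_mul_div_pow m r
    _ = _ := by rw [← mul_pow]; ring

theorem choose_mul_choose_mul_pow_le {n m k : ℕ} {p : ℝ} (hd : 14 ≤ d1 n m p) (hk : 1 ≤ k)
    (hkn : k * d1 n m p ^ 3 ≤ n) :
    n.choose k * (m.choose (2 * k + 1) * ((k : ℝ) ^ 2 * p ^ 2) ^ (2 * k + 1)) ≤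
      (1 / 2) ^ k * (3 / (2 * d1 n m p ^ 2)) := by
  set d := d1 n m p
  have hk0 : (0 : ℝ) < k := by exact_mod_cast hk
  have hn0 : (0 : ℝ) < n := lt_of_lt_of_le (by positivity) hkn
  set t := 3 * d * k / (2 * n)
  have hfeat : m.choose (2 * k + 1) * ((k : ℝ) ^ 2 * p ^ 2) ^ (2 * k + 1) ≤ t ^ (2 * k + 1) := by
    refine (Nat.choose_mul_pow_le _ _ (by positivity)).trans
      (pow_le_pow_left₀ (by positivity) ?_ _)
    rw [div_le_div_iff₀ (by positivity) (by positivity)]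
    simp only [d, d1]; push_cast
    linarith [mul_nonneg (mul_nonneg (mul_nonneg hn0.le m.cast_nonneg) (sq_nonneg p)) hk0.le]
  have hbase : 3 * n / k * t ^ 2 ≤ 1 / 2 := by
    rw [show 3 * n / k * t ^ 2 = 27 * d ^ 2 * k / (4 * n) by simp only [t]; field_simp; ring,
      div_le_iff₀ (by positivity)]
    nlinarith
  have ht : t ≤ 3 / (2 * d ^ 2) := by
    rw [div_le_div_iff₀ (by positivity) (by positivity)]
    nlinarith
  calc _ ≤ (3 * n / k) ^ k * t ^ (2 * k + 1) := by
        gcongr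
        · exact Nat.choose_le_three_mul_div_pow n k
    _ = (3 * n / k * t ^ 2) ^ k * t := by rw [mul_pow, ← pow_mul, mul_assoc, ← pow_succ]
    _ ≤ _ := by gcongr

theorem firstMomentBound_le {n m : ℕ} {p : ℝ} (hd : 14 ≤ d1 n m p) :
    firstMomentBound n m p (n / d1 n m p ^ 3) ≤ 3 / d1 n m p ^ 2 := by
  have hd0 : 0 < d1 n m p := by linarith
  calc _ ≤ ∑ k ∈ range (n + 1), (1 / 2 : ℝ) ^ k * (3 / (2 * d1 n m p ^ 2)) := by
        refine sum_le_sum fun k _ => ?_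
        split_ifs with hk
        · exact choose_mul_choose_mul_pow_le hd (by omega)
            ((le_div_iff₀ (by positivity)).1 hk.2)
        · simp only [mul_zero]; positivity
    _ = (∑ k ∈ range (n + 1), (1 / 2 : ℝ) ^ k) * (3 / (2 * d1 n m p ^ 2)) := (sum_mul ..).symm
    _ ≤ 2 * (3 / (2 * d1 n m p ^ 2)) := by gcongr; exact sum_geometric_two_le _
    _ = 3 / d1 n m p ^ 2 := by field_simp

theorem few_doubly_covered_features (m : ℕ → ℕ) (p : ℕ → ℝ)
    (hp : ∀ n, p n ∈ Set.Ioo (0 : ℝ) 1)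
    (hd1 : Tendsto (fun (n : ℕ) => d1 n (m n) (p n)) atTop atTop) :
    Tendsto (fun (n : ℕ) => (rig n (m n) (p n)
        {ω | ∀ K : Set (Fin n),
          (K.ncard : ℝ) ≤ n / (d1 n (m n) (p n)) ^ 3 →
          (WSpp ω K : ℝ) ≤ 2 * K.ncard}).toReal)
      atTop (nhds 1) := by
  set good : ∀ n, Set (Fin n → Fin (m n) → Bool) := fun n => {ω | ∀ K : Set (Fin n),
    (K.ncard : ℝ) ≤ n / (d1 n (m n) (p n)) ^ 3 → (WSpp ω K : ℝ) ≤ 2 * K.ncard}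
  have hbad : Tendsto (fun n => (rig n (m n) (p n)).real (good n)ᶜ) atTop (nhds 0) := by
    have hlim : Tendsto (fun n => 3 / d1 n (m n) (p n) ^ 2) atTop (nhds 0) :=
      tendsto_const_nhds.div_atTop ((tendsto_pow_atTop two_ne_zero).comp hd1)
    refine squeeze_zero' (Eventually.of_forall fun _ => measureReal_nonneg) ?_ hlim
    filter_upwards [hd1.eventually_ge_atTop 14] with n hn
    exact ENNReal.toReal_le_of_le_ofReal (by positivity)
      ((rig_exists_many_doubly_covered_le (hp n).1.le _).trans
        (ENNReal.ofReal_le_ofReal (firstMomentBound_le hn)))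
  refine (by simpa using tendsto_const_nhds.sub hbad :
    Tendsto (fun n => 1 - (rig n (m n) (p n)).real (good n)ᶜ) atTop (nhds 1)).congr fun n => ?_
  rw [probReal_compl_eq_one_sub (Set.toFinite _).measurableSet, sub_sub_cancel]
  rfl
end

section
/- Let d0 = mp(1-(1-p)^{n-1}) and d1 = nmp², with p ∈ (0,1). Then d0 ≤ mp and d0 ≤ d1. Moreover, for all sufficiently large n: if np > 40 then 0.9·mp ≤ d0 ≤ mp, and if np ≤ 40 then d0 ≤ d1 ≤ 40.1·d0. In addition, d0 ≤ mp·min{np,1} and d1 ≤ 2·d0·max{np,1}. -/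
open MeasureTheory Filter

/-!
With `q = (1 - p)^(n-1)` we have `d0 = mp(1 - q)` and `d1 = mp · np`. Bernoulli's inequality gives
`1 - q ≤ (n-1)p ≤ np`, and `1 - p ≤ e^{-p}` gives `q ≤ e^{-x}` for `x = (n-1)p`, which is `np` up to
a factor `1000/999` once `n ≥ 1000`. Since `(1 - e^{-x})/x` is decreasing (a secant slope of the
convex function `exp`), `1 - e^{-x} ≥ x (1 - e^{-c})/c` for `0 < x ≤ c`; taking `c = 40` and `c = 1`
gives the lower bounds on `1 - q` behind `d1 ≤ 40.1 d0` and `d1 ≤ 2 d0 max(np, 1)`.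
-/

open Real Set

theorem antitoneOn_one_sub_exp_neg_div : AntitoneOn (fun x : ℝ => (1 - exp (-x)) / x) (Ioi 0) := by
  intro x hx y hy hxy
  have h := convexOn_exp.secant_mono (a := 0) trivial trivial trivial
    (neg_ne_zero.2 (ne_of_gt hy)) (neg_ne_zero.2 (ne_of_gt hx)) (neg_le_neg hxy)
  rwa [exp_zero, sub_zero, sub_zero, ← neg_div_neg_eq, neg_sub, neg_neg,
    ← neg_div_neg_eq (exp (-x) - 1), neg_sub, neg_neg] at h

theorem mul_div_le_one_sub_exp_neg {x c : ℝ} (hx : 0 < x) (hxc : x ≤ c) :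
    x * ((1 - exp (-c)) / c) ≤ 1 - exp (-x) := by
  rw [← le_div_iff₀' hx]
  exact antitoneOn_one_sub_exp_neg_div hx (hx.trans_le hxc) hxc

theorem exp_neg_le_inv_quadratic {c : ℝ} (hc : 0 ≤ c) : exp (-c) ≤ (1 + c + c ^ 2 / 2)⁻¹ := by
  rw [exp_neg]
  exact inv_anti₀ (by positivity) (quadratic_le_exp_of_nonneg hc)

theorem one_sub_pow_le_exp_neg_mul {p : ℝ} (hp : p ≤ 1) (k : ℕ) :
    (1 - p) ^ k ≤ exp (-(k * p)) := by
  rw [neg_mul_eq_mul_neg, exp_nat_mul]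
  exact pow_le_pow_left₀ (by linarith) (by linarith [add_one_le_exp (-p)]) k

theorem one_sub_mul_le_one_sub_pow {p : ℝ} (hp : p ≤ 2) (k : ℕ) :
    1 - k * p ≤ (1 - p) ^ k := by
  simpa [sub_eq_add_neg] using one_add_mul_le_pow (a := -p) (by linarith) k

section HitProbability

variable {n : ℕ} {p : ℝ}

theorem one_sub_one_sub_pow_pred_le (hp0 : 0 ≤ p) (hp1 : p ≤ 1) :
    1 - (1 - p) ^ (n - 1) ≤ n * p := by
  have hk : ((n - 1 : ℕ) : ℝ) ≤ n := by exact_mod_cast n.sub_le 1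
  nlinarith [one_sub_mul_le_one_sub_pow (by linarith : p ≤ 2) (n - 1)]

theorem mul_le_pred_mul_of_thousand_le (hn : 1000 ≤ n) (hp : 0 ≤ p) :
    n * p ≤ 1000 / 999 * ((n - 1 : ℕ) * p) := by
  have hk : ((n - 1 : ℕ) : ℝ) = n - 1 := by rw [Nat.cast_pred (by omega)]
  have hn' : (1000 : ℝ) ≤ n := by exact_mod_cast hn
  rw [hk]
  nlinarith

theorem nine_tenths_le_one_sub_one_sub_pow_pred (hp1 : p ≤ 1) (h : 40 < n * p) :
    0.9 ≤ 1 - (1 - p) ^ (n - 1) := by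
  have hn : n ≠ 0 := by rintro rfl; norm_num at h
  have hx : 39 ≤ ((n - 1 : ℕ) : ℝ) * p := by
    rw [Nat.cast_pred (Nat.pos_of_ne_zero hn)]; linarith
  have hq := one_sub_pow_le_exp_neg_mul hp1 (n - 1)
  have he := (exp_le_exp.2 (neg_le_neg hx)).trans
    (exp_neg_le_inv_quadratic (by norm_num : (0 : ℝ) ≤ 39))
  norm_num at he
  linarith

theorem mul_le_one_sub_one_sub_pow_pred_of_le (hn : 1000 ≤ n) (hp0 : 0 < p) (hp1 : p ≤ 1)
    (h : n * p ≤ 40) : n * p ≤ 40.1 * (1 - (1 - p) ^ (n - 1)) := by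
  set x : ℝ := ((n - 1 : ℕ) : ℝ) * p
  have hx0 : 0 < x := mul_pos (by exact_mod_cast (by omega : 0 < n - 1)) hp0
  have hnx := mul_le_pred_mul_of_thousand_le hn hp0.le
  have hx40 : x ≤ 40 := by
    have : ((n - 1 : ℕ) : ℝ) ≤ n := by exact_mod_cast n.sub_le 1
    nlinarith
  have hslope := mul_div_le_one_sub_exp_neg hx0 hx40
  have he40 := exp_neg_le_inv_quadratic (by norm_num : (0 : ℝ) ≤ 40)
  have hq := one_sub_pow_le_exp_neg_mul hp1 (n - 1)
  norm_num at he40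
  nlinarith [mul_le_mul_of_nonneg_left he40 hx0.le]

theorem mul_le_two_mul_max_mul_one_sub_one_sub_pow_pred (hn : 1000 ≤ n) (hp0 : 0 < p)
    (hp1 : p ≤ 1) : n * p ≤ 2 * max (n * p) 1 * (1 - (1 - p) ^ (n - 1)) := by
  set x : ℝ := ((n - 1 : ℕ) : ℝ) * p
  have hx0 : 0 < x := mul_pos (by exact_mod_cast (by omega : 0 < n - 1)) hp0
  have hnx := mul_le_pred_mul_of_thousand_le hn hp0.le
  have hq := one_sub_pow_le_exp_neg_mul hp1 (n - 1)
  have he1 := exp_neg_le_inv_quadratic zero_le_one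
  norm_num at he1
  rcases le_or_gt x 1 with hx1 | hx1
  · have hslope := mul_div_le_one_sub_exp_neg hx0 hx1
    nlinarith [mul_le_mul_of_nonneg_left he1 hx0.le, le_max_right (n * p : ℝ) 1]
  · have := exp_le_exp.2 (neg_le_neg hx1.le)
    nlinarith [le_max_left (n * p : ℝ) 1, le_max_right (n * p : ℝ) 1]

end HitProbability

section Degrees

variable {n m : ℕ} {p : ℝ}

theorem d0_le (hp0 : 0 ≤ p) (hp1 : p ≤ 1) : d0 n m p ≤ m * p := by
  have hq : 0 ≤ (1 - p) ^ (n - 1) := pow_nonneg (by linarith) _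
  unfold d0
  nlinarith [mul_nonneg (mul_nonneg m.cast_nonneg hp0) hq]

theorem d0_le_d1 (hp0 : 0 ≤ p) (hp1 : p ≤ 1) : d0 n m p ≤ d1 n m p := by
  have h := mul_le_mul_of_nonneg_left (one_sub_one_sub_pow_pred_le (n := n) hp0 hp1)
    (mul_nonneg m.cast_nonneg hp0)
  unfold d0 d1
  linear_combination h

theorem d0_le_mul_min (hp0 : 0 ≤ p) (hp1 : p ≤ 1) : d0 n m p ≤ m * p * min (n * p) 1 := by
  have hq : 0 ≤ (1 - p) ^ (n - 1) := pow_nonneg (by linarith) _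
  exact mul_le_mul_of_nonneg_left (le_min (one_sub_one_sub_pow_pred_le hp0 hp1) (by linarith))
    (mul_nonneg m.cast_nonneg hp0)

theorem mul_le_d0_of_le {c : ℝ} (hp0 : 0 ≤ p) (h : c ≤ 1 - (1 - p) ^ (n - 1)) :
    c * (m * p) ≤ d0 n m p := by
  unfold d0
  nlinarith [mul_le_mul_of_nonneg_left h (mul_nonneg m.cast_nonneg hp0)]

theorem d1_le_mul_d0_of_le {C : ℝ} (hp0 : 0 ≤ p) (h : n * p ≤ C * (1 - (1 - p) ^ (n - 1))) :
    d1 n m p ≤ C * d0 n m p := by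
  have := mul_le_mul_of_nonneg_left h (mul_nonneg m.cast_nonneg hp0)
  unfold d0 d1
  linear_combination this

end Degrees

theorem d0_d1_relations (m : ℕ → ℕ) (p : ℕ → ℝ)
    (hp : ∀ n, p n ∈ Set.Ioo (0 : ℝ) 1) :
    (∀ n, d0 n (m n) (p n) ≤ (m n : ℝ) * p n) ∧
    (∀ n, d0 n (m n) (p n) ≤ d1 n (m n) (p n)) ∧
    (∀ n, d0 n (m n) (p n) ≤ (m n : ℝ) * p n * min ((n : ℝ) * p n) 1) ∧
    (∀ᶠ (n : ℕ) in atTop,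
      (40 < (n : ℝ) * p n →
        0.9 * ((m n : ℝ) * p n) ≤ d0 n (m n) (p n) ∧ d0 n (m n) (p n) ≤ (m n : ℝ) * p n) ∧
      ((n : ℝ) * p n ≤ 40 →
        d0 n (m n) (p n) ≤ d1 n (m n) (p n) ∧ d1 n (m n) (p n) ≤ 40.1 * d0 n (m n) (p n)) ∧
      d1 n (m n) (p n) ≤ 2 * d0 n (m n) (p n) * max ((n : ℝ) * p n) 1) := by
  have hp0 n : 0 ≤ p n := (hp n).1.le
  have hp1 n : p n ≤ 1 := (hp n).2.le
  refine ⟨fun n => d0_le (hp0 n) (hp1 n), fun n => d0_le_d1 (hp0 n) (hp1 n),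
    fun n => d0_le_mul_min (hp0 n) (hp1 n), ?_⟩
  filter_upwards [eventually_ge_atTop 1000] with n hn
  refine ⟨fun h => ⟨mul_le_d0_of_le (hp0 n) (nine_tenths_le_one_sub_one_sub_pow_pred (hp1 n) h),
      d0_le (hp0 n) (hp1 n)⟩,
    fun h => ⟨d0_le_d1 (hp0 n) (hp1 n), d1_le_mul_d0_of_le (hp0 n)
      (mul_le_one_sub_one_sub_pow_pred_of_le hn (hp n).1 (hp1 n) h)⟩, ?_⟩
  have := d1_le_mul_d0_of_le (m := m n) (hp0 n)
    (mul_le_two_mul_max_mul_one_sub_one_sub_pow_pred hn (hp n).1 (hp1 n))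
  linear_combination this
end
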